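/- For every 0 < a ≤ 1, the function ℓ(δ) = 2^{2−a}(e^δ − 1)(log 2)^{1−a}(log(e^{−δ}+1) + log(e^δ+1))^{a−1}/(e^δ + 1) satisfies: (i) ℓ(−δ) = −ℓ(δ) for all δ ∈ ℝ; (ii) ℓ(δ) > 0 for every δ > 0; (iii) |ℓ(δ)| ≤ 3 for every δ ∈ ℝ. -/

import Mathlib

/-!
Write `ℓ(δ) = S(δ) · (e^δ - 1)/(e^δ + 1)` with `S(δ) = 2^{2-a} (log 2)^{1-a} L(δ)^{a-1}` and
`L(δ) = log(e^{-δ}+1) + log(e^δ+1) = log(2 + 2 cosh δ)`. The second factor is odd, positive for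
`δ > 0` and bounded by `1` in absolute value. `L` is even and `L ≥ 2 log 2` because `cosh ≥ 1`;
so `S` is even and positive, and for `a ≤ 1` it is at most its value `2` at `L = 2 log 2`.
-/

/-- `ℓ(δ) = F_a'(1+δ)
  = 2^{2-a}(e^δ - 1)(log 2)^{1-a}(log(e^{-δ}+1)+log(e^δ+1))^{a-1}/(e^δ+1)`. -/
noncomputable def ell (a δ : ℝ) : ℝ :=
  (2 : ℝ) ^ (2 - a) * (Real.exp δ - 1) * Real.log 2 ^ (1 - a) *
    (Real.log (Real.exp (-δ) + 1) + Real.log (Real.exp δ + 1)) ^ (a - 1) /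
    (Real.exp δ + 1)

open Real

lemma exp_neg_sub_one_div_exp_neg_add_one (δ : ℝ) :
    (exp (-δ) - 1) / (exp (-δ) + 1) = -((exp δ - 1) / (exp δ + 1)) := by
  rw [exp_neg]
  field_simp
  ring

lemma exp_sub_one_div_exp_add_one_pos {δ : ℝ} (hδ : 0 < δ) : 0 < (exp δ - 1) / (exp δ + 1) :=
  div_pos (sub_pos.2 (one_lt_exp_iff.2 hδ)) (by positivity)

lemma abs_exp_sub_one_div_exp_add_one_le_one (δ : ℝ) : |(exp δ - 1) / (exp δ + 1)| ≤ 1 := by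
  have hpos : 0 < exp δ := exp_pos δ
  rw [abs_div, abs_of_pos (by positivity : 0 < exp δ + 1), div_le_one (by positivity), abs_le]
  constructor <;> linarith

noncomputable def logSum (δ : ℝ) : ℝ := log (exp (-δ) + 1) + log (exp δ + 1)

lemma logSum_neg (δ : ℝ) : logSum (-δ) = logSum δ := by
  rw [logSum, logSum, neg_neg, add_comm]

lemma logSum_eq_log_two_add_two_mul_cosh (δ : ℝ) : logSum δ = log (2 + 2 * cosh δ) := by
  rw [logSum, ← log_mul (by positivity) (by positivity), cosh_eq]
  congr 1
  have : exp (-δ) * exp δ = 1 := by rw [← exp_add, neg_add_cancel, exp_zero]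
  linear_combination this

lemma two_mul_log_two_le_logSum (δ : ℝ) : 2 * log 2 ≤ logSum δ := by
  rw [logSum_eq_log_two_add_two_mul_cosh, ← log_rpow two_pos]
  exact log_le_log (by positivity) (by linarith [one_le_cosh δ])

lemma logSum_pos (δ : ℝ) : 0 < logSum δ :=
  lt_of_lt_of_le (mul_pos two_pos (log_pos one_lt_two)) (two_mul_log_two_le_logSum δ)

noncomputable def ellScale (a δ : ℝ) : ℝ := 2 ^ (2 - a) * log 2 ^ (1 - a) * logSum δ ^ (a - 1)

lemma ell_eq_ellScale_mul (a δ : ℝ) :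
    ell a δ = ellScale a δ * ((exp δ - 1) / (exp δ + 1)) := by
  rw [ell, ellScale, logSum]
  ring

lemma ellScale_neg (a δ : ℝ) : ellScale a (-δ) = ellScale a δ := by
  rw [ellScale, ellScale, logSum_neg]

lemma ellScale_pos (a δ : ℝ) : 0 < ellScale a δ := by
  have := log_pos one_lt_two
  have := logSum_pos δ
  unfold ellScale
  positivity

lemma ellScale_le_two {a : ℝ} (ha : a ≤ 1) (δ : ℝ) : ellScale a δ ≤ 2 := by
  have hlog2 : 0 < log 2 := log_pos one_lt_two
  calc ellScale a δ ≤ 2 ^ (2 - a) * log 2 ^ (1 - a) * (2 * log 2) ^ (a - 1) := by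
        unfold ellScale
        refine mul_le_mul_of_nonneg_left ?_ (by positivity)
        exact rpow_le_rpow_of_nonpos (by positivity) (two_mul_log_two_le_logSum δ) (by linarith)
    _ = 2 ^ ((2 - a) + (a - 1)) * log 2 ^ ((1 - a) + (a - 1)) := by
        rw [mul_rpow zero_le_two hlog2.le, rpow_add two_pos, rpow_add hlog2]
        ring
    _ = 2 := by norm_num

theorem stmt_10_general (a : ℝ) (ha1 : a ≤ 1) :
    (∀ δ : ℝ, ell a (-δ) = -ell a δ) ∧
    (∀ δ : ℝ, 0 < δ → 0 < ell a δ) ∧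
    (∀ δ : ℝ, |ell a δ| ≤ 3) := by
  refine ⟨fun δ => ?_, fun δ hδ => ?_, fun δ => ?_⟩
  · rw [ell_eq_ellScale_mul, ell_eq_ellScale_mul, ellScale_neg,
      exp_neg_sub_one_div_exp_neg_add_one, mul_neg]
  · rw [ell_eq_ellScale_mul]
    exact mul_pos (ellScale_pos a δ) (exp_sub_one_div_exp_add_one_pos hδ)
  · calc |ell a δ| = ellScale a δ * |(exp δ - 1) / (exp δ + 1)| := by
          rw [ell_eq_ellScale_mul, abs_mul, abs_of_pos (ellScale_pos a δ)]
      _ ≤ 2 * 1 := mul_le_mul (ellScale_le_two ha1 δ)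
          (abs_exp_sub_one_div_exp_add_one_le_one δ) (abs_nonneg _) zero_le_two
      _ ≤ 3 := by norm_num

theorem stmt_10 (a : ℝ) (ha0 : 0 < a) (ha1 : a ≤ 1) :
    (∀ δ : ℝ, ell a (-δ) = -ell a δ) ∧
    (∀ δ : ℝ, 0 < δ → 0 < ell a δ) ∧
    (∀ δ : ℝ, |ell a δ| ≤ 3) :=
  stmt_10_general a ha1
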